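/- arXiv:2507.05873 — 4 statements merged into one kernel-verified Lean document; each statement's English description precedes it below -/
import Mathlib

section
/- Let Q, Q' be real n×k matrices with orthonormal columns (QᵀQ = Q'ᵀQ' = I_k) and S, S' real symmetric positive definite k×k matrices. If Q·S·Qᵀ = Q'·S'·Q'ᵀ, then there exists G ∈ O(k) with Q' = Q·G and S' = Gᵀ·S·G. (This is the matrix-level injectivity of the bundle diffeomorphism φ : M(n,k) → Sym(n,k), φ([Q,S]) = Q·S·Qᵀ, where M(n,k) = (St(n,k) × Sym⁺(k))/O(k) with (Q,S) ∼ (QG, GᵀSG).) -/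
open Matrix

/-!
Put `G = Qᵀ Q'`. Multiplying `Q S Qᵀ = Q' S' Q'ᵀ` on the right by `Q'` gives
`Q' S' = Q S Qᵀ Q'`, so the columns of `Q' S'` lie in the column space of `Q`, on which
`Q Qᵀ` is the identity; cancelling the invertible `S'` yields `Q G = Q'`. Then
`Gᵀ G = Q'ᵀ Q' = 1`, and conjugating the hypothesis by `Q'` gives `S' = Gᵀ S G`.
-/

namespace Matrix

variable {R m k l : Type*} [CommRing R] [Fintype m] [Fintype k] [Fintype l]
  [DecidableEq k] [DecidableEq l]

theorem transpose_mul_conj_mul {Q : Matrix m k R} (hQ : Qᵀ * Q = 1)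
    (A : Matrix k k R) : Qᵀ * (Q * A * Qᵀ) * Q = A := by
  simp only [Matrix.mul_assoc, hQ, Matrix.mul_one]
  rw [← Matrix.mul_assoc, hQ, Matrix.one_mul]

theorem mul_transpose_mul_conj {Q : Matrix m k R} (hQ : Qᵀ * Q = 1)
    (A : Matrix k k R) : Q * Qᵀ * (Q * A * Qᵀ) = Q * A * Qᵀ := by
  rw [Matrix.mul_assoc Q Qᵀ, ← Matrix.mul_assoc Qᵀ, ← Matrix.mul_assoc Qᵀ, hQ,
    Matrix.one_mul, Matrix.mul_assoc]

theorem conj_mul_self {Q : Matrix m k R} (hQ : Qᵀ * Q = 1) (A : Matrix k k R) :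
    Q * A * Qᵀ * Q = Q * A := by
  rw [Matrix.mul_assoc, hQ, Matrix.mul_one]

theorem mul_transpose_mul_eq_of_conj_eq {Q : Matrix m k R} {Q' : Matrix m l R}
    (hQ : Qᵀ * Q = 1) (hQ' : Q'ᵀ * Q' = 1) {S : Matrix k k R} {S' : Matrix l l R}
    (hS' : IsUnit S') (h : Q * S * Qᵀ = Q' * S' * Q'ᵀ) : Q * (Qᵀ * Q') = Q' := by
  have hQ'S' : Q' * S' = Q * S * Qᵀ * Q' := by
    rw [h, conj_mul_self hQ']
  have hcancel : Q * (Qᵀ * Q') * S' = Q' * S' :=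
    calc Q * (Qᵀ * Q') * S' = Q * Qᵀ * (Q' * S') := by simp only [Matrix.mul_assoc]
      _ = Q * Qᵀ * (Q * S * Qᵀ) * Q' := by rw [hQ'S', Matrix.mul_assoc _ (Q * S * Qᵀ)]
      _ = Q' * S' := by rw [mul_transpose_mul_conj hQ, hQ'S']
  let _ : Invertible S' := hS'.invertible
  exact (mul_left_inj_of_invertible S').mp hcancel

end Matrix

theorem bundle_map_injective_general {n k : ℕ}
    (Q Q' : Matrix (Fin n) (Fin k) ℝ) (hQ : Qᵀ * Q = 1) (hQ' : Q'ᵀ * Q' = 1)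
    (S S' : Matrix (Fin k) (Fin k) ℝ)
    (hS' : S'.PosDef)
    (h : Q * S * Qᵀ = Q' * S' * Q'ᵀ) :
    ∃ G : Matrix (Fin k) (Fin k) ℝ, Gᵀ * G = 1 ∧ Q' = Q * G ∧ S' = Gᵀ * S * G := by
  have hQG : Q * (Qᵀ * Q') = Q' := mul_transpose_mul_eq_of_conj_eq hQ hQ' hS'.isUnit h
  refine ⟨Qᵀ * Q', ?_, hQG.symm, ?_⟩
  · rw [transpose_mul, transpose_transpose, Matrix.mul_assoc, hQG, hQ']
  · rw [← transpose_mul_conj_mul hQ' S', ← h, transpose_mul, transpose_transpose]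
    simp only [Matrix.mul_assoc]

/-- **Matrix-level injectivity of the bundle diffeomorphism.** If `Q, Q'` have orthonormal
columns, `S, S'` are symmetric positive definite, and `Q * S * Qᵀ = Q' * S' * Q'ᵀ`, then there
exists an orthogonal `G` with `Q' = Q * G` and `S' = Gᵀ * S * G`. -/
theorem bundle_map_injective {n k : ℕ}
    (Q Q' : Matrix (Fin n) (Fin k) ℝ) (hQ : Qᵀ * Q = 1) (hQ' : Q'ᵀ * Q' = 1)
    (S S' : Matrix (Fin k) (Fin k) ℝ)
    (hS : S.PosDef) (hSsymm : S.IsSymm) (hS' : S'.PosDef) (hS'symm : S'.IsSymm)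
    (h : Q * S * Qᵀ = Q' * S' * Q'ᵀ) :
    ∃ G : Matrix (Fin k) (Fin k) ℝ, Gᵀ * G = 1 ∧ Q' = Q * G ∧ S' = Gᵀ * S * G :=
  bundle_map_injective_general Q Q' hQ hQ' S S' hS' h
end

section
/- Let Q ∈ ℝ^{n×k} and Q_⊥ ∈ ℝ^{n×(n−k)} satisfy QᵀQ = I_k, Q_⊥ᵀQ_⊥ = I_{n−k}, QᵀQ_⊥ = 0. Let D be a symmetric positive definite k×k matrix, B_V, B_W ∈ ℝ^{(n−k)×k}, and T_V, T_W symmetric k×k matrices. Then trace( Q_⊥Q_⊥ᵀ · (Q_⊥B_V D Qᵀ + Q D B_Vᵀ Q_⊥ᵀ + Q T_V Qᵀ) · Q D⁻¹ Qᵀ · (Q_⊥B_W D Qᵀ + Q D B_Wᵀ Q_⊥ᵀ + Q T_W Qᵀ) ) = trace(B_V · D · B_Wᵀ). (This computes the horizontal part of the pullback of the Bures–Wasserstein metric to the bundle M(n,k).) -/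
open Matrix

/-! Cycling the outer `Qp` around the trace, only two blocks of the tangent images are seen:
`Qpᵀ V = B_V D Qᵀ` and `Qᵀ W Qp = D B_Wᵀ`; between them `Qᵀ Q = 1` and `D D⁻¹ = 1` cancel. -/

section OrthonormalFrame

variable {m k l R : Type*} [Fintype m] [Fintype k] [Fintype l] [DecidableEq l]
  [CommRing R] {Q : Matrix m k R} {Qp : Matrix m l R}

/-- `dφ_[Q, D]` applied to the tangent vector `(Qp B, T)` of the bundle model. -/
def tangentImage (Q : Matrix m k R) (Qp : Matrix m l R) (D : Matrix k k R) (B : Matrix l k R)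
    (T : Matrix k k R) : Matrix m m R :=
  Qp * B * D * Qᵀ + Q * D * Bᵀ * Qpᵀ + Q * T * Qᵀ

theorem transpose_mul_tangentImage_left (hQp : Qpᵀ * Qp = 1) (horth : Qᵀ * Qp = 0)
    (D : Matrix k k R) (B : Matrix l k R) (T : Matrix k k R) :
    Qpᵀ * tangentImage Q Qp D B T = B * D * Qᵀ := by
  have hQpQ : Qpᵀ * Q = 0 := by simpa using congrArg transpose horth
  simp only [tangentImage, Matrix.mul_add, ← Matrix.mul_assoc, hQp, hQpQ, Matrix.one_mul,
    Matrix.zero_mul, add_zero]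

theorem transpose_mul_tangentImage_mul [DecidableEq k] (hQ : Qᵀ * Q = 1) (hQp : Qpᵀ * Qp = 1)
    (horth : Qᵀ * Qp = 0) (D : Matrix k k R) (B : Matrix l k R) (T : Matrix k k R) :
    Qᵀ * tangentImage Q Qp D B T * Qp = D * Bᵀ := by
  simp only [tangentImage, Matrix.mul_add, Matrix.add_mul, ← Matrix.mul_assoc, hQ, horth,
    Matrix.one_mul, Matrix.zero_mul, zero_add]
  simp only [Matrix.mul_assoc, hQp, horth, Matrix.mul_one, Matrix.mul_zero, add_zero]

end OrthonormalFrame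

theorem horizontal_metric_pullback_general {n k : ℕ}
    (Q : Matrix (Fin n) (Fin k) ℝ) (Qp : Matrix (Fin n) (Fin (n - k)) ℝ)
    (hQ : Qᵀ * Q = 1) (hQp : Qpᵀ * Qp = 1) (horth : Qᵀ * Qp = 0)
    (D : Matrix (Fin k) (Fin k) ℝ) (hD : D.PosDef)
    (BV BW : Matrix (Fin (n - k)) (Fin k) ℝ)
    (TV TW : Matrix (Fin k) (Fin k) ℝ) :
    (Qp * Qpᵀ * (Qp * BV * D * Qᵀ + Q * D * BVᵀ * Qpᵀ + Q * TV * Qᵀ) *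
        (Q * D⁻¹ * Qᵀ) *
        (Qp * BW * D * Qᵀ + Q * D * BWᵀ * Qpᵀ + Q * TW * Qᵀ)).trace =
      (BV * D * BWᵀ).trace := by
  have hDdet : IsUnit D.det := (isUnit_iff_isUnit_det D).mp hD.isUnit
  change (Qp * Qpᵀ * tangentImage Q Qp D BV TV * (Q * D⁻¹ * Qᵀ) *
    tangentImage Q Qp D BW TW).trace = _
  calc _ = (Qpᵀ * tangentImage Q Qp D BV TV * Q * D⁻¹ *
          (Qᵀ * tangentImage Q Qp D BW TW * Qp)).trace := by
        simp only [Matrix.mul_assoc]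
        rw [trace_mul_comm]
        simp only [Matrix.mul_assoc]
    _ = (BV * D * (Qᵀ * Q) * D⁻¹ * (D * BWᵀ)).trace := by
        rw [transpose_mul_tangentImage_left hQp horth, transpose_mul_tangentImage_mul hQ hQp horth]
        simp only [Matrix.mul_assoc]
    _ = (BV * D * BWᵀ).trace := by
        rw [hQ, Matrix.mul_one, mul_nonsing_inv_cancel_right _ _ hDdet, Matrix.mul_assoc]

/-- **Horizontal part of the pulled-back Bures–Wasserstein metric.** With `[Q Qp]` an
orthogonal completion, `D` symmetric positive definite, `B_V, B_W` arbitrary and `T_V, T_W`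
symmetric, the horizontal Bures–Wasserstein pairing of the tangent images equals
`trace (B_V * D * B_Wᵀ)`. -/
theorem horizontal_metric_pullback {n k : ℕ}
    (Q : Matrix (Fin n) (Fin k) ℝ) (Qp : Matrix (Fin n) (Fin (n - k)) ℝ)
    (hQ : Qᵀ * Q = 1) (hQp : Qpᵀ * Qp = 1) (horth : Qᵀ * Qp = 0)
    (D : Matrix (Fin k) (Fin k) ℝ) (hD : D.PosDef) (hDsymm : D.IsSymm)
    (BV BW : Matrix (Fin (n - k)) (Fin k) ℝ)
    (TV TW : Matrix (Fin k) (Fin k) ℝ) (hTV : TV.IsSymm) (hTW : TW.IsSymm) :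
    (Qp * Qpᵀ * (Qp * BV * D * Qᵀ + Q * D * BVᵀ * Qpᵀ + Q * TV * Qᵀ) *
        (Q * D⁻¹ * Qᵀ) *
        (Qp * BW * D * Qᵀ + Q * D * BWᵀ * Qpᵀ + Q * TW * Qᵀ)).trace =
      (BV * D * BWᵀ).trace :=
  horizontal_metric_pullback_general Q Qp hQ hQp horth D hD BV BW TV TW
end

section
/- Let θ₀ ∈ ℝ, d₀ > 0, b₀ ≠ 0, s₀ ∈ ℝ. Set r₀ = s₀/b₀ and C = b₀(r₀² + 1), and define for t ∈ ℝ: b(t) = C/((Ct + r₀)² + 1), s(t) = C(Ct + r₀)/((Ct + r₀)² + 1), d(t) = d₀((Ct + r₀)² + 1)/(r₀² + 1), θ(t) = θ₀ + arctan(Ct + r₀) − arctan(r₀). Then for every t ∈ ℝ these functions satisfy the geodesic system θ'(t) = b(t), d'(t) = 2·d(t)·s(t), b'(t) = −2·b(t)·s(t), s'(t) = b(t)² − s(t)², with initial conditions θ(0) = θ₀, d(0) = d₀, b(0) = b₀, s(0) = s₀. -/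
/-! Along the geodesic everything is a rational function of the affine parameter `w = C t + r₀`:
`b = C / (w² + 1)`, `s = C w / (w² + 1)`, `d ∝ w² + 1` and `θ = arctan w` up to a constant, so each
equation of the system is a one-line quotient-rule computation using `w' = C`. -/

open Real

section AffineProfile

variable (C r t : ℝ)

lemma affine_sq_add_one_ne_zero : (C * t + r) ^ 2 + 1 ≠ 0 := by positivity

lemma hasDerivAt_affine : HasDerivAt (fun t : ℝ => C * t + r) C t := by
  simpa using ((hasDerivAt_id t).const_mul C).add_const r

lemma hasDerivAt_affine_sq_add_one :
    HasDerivAt (fun t : ℝ => (C * t + r) ^ 2 + 1) (2 * (C * t + r) * C) t := by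
  simpa [mul_comm] using ((hasDerivAt_affine C r t).pow 2).add_const 1

lemma hasDerivAt_arctan_affine (θ₀ : ℝ) :
    HasDerivAt (fun t : ℝ => θ₀ + arctan (C * t + r) - arctan r)
      (C / ((C * t + r) ^ 2 + 1)) t := by
  have h := (((hasDerivAt_arctan (C * t + r)).comp t (hasDerivAt_affine C r t)).const_add θ₀)
    |>.sub_const (arctan r)
  refine h.congr_deriv ?_
  rw [one_div, inv_mul_eq_div, add_comm 1]

lemma hasDerivAt_const_mul_affine_sq_add_one_div (a c : ℝ) :
    HasDerivAt (fun t : ℝ => a * ((C * t + r) ^ 2 + 1) / c)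
      (2 * (a * ((C * t + r) ^ 2 + 1) / c) * (C * (C * t + r) / ((C * t + r) ^ 2 + 1))) t := by
  refine ((hasDerivAt_affine_sq_add_one C r t).const_mul a).div_const c |>.congr_deriv ?_
  have := affine_sq_add_one_ne_zero C r t
  field_simp

lemma hasDerivAt_const_div_affine_sq_add_one :
    HasDerivAt (fun t : ℝ => C / ((C * t + r) ^ 2 + 1))
      (-2 * (C / ((C * t + r) ^ 2 + 1)) * (C * (C * t + r) / ((C * t + r) ^ 2 + 1))) t := by
  have hq := affine_sq_add_one_ne_zero C r t
  refine (hasDerivAt_const t C).div (hasDerivAt_affine_sq_add_one C r t) hq |>.congr_deriv ?_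
  field_simp
  ring

lemma hasDerivAt_mul_affine_div_affine_sq_add_one :
    HasDerivAt (fun t : ℝ => C * (C * t + r) / ((C * t + r) ^ 2 + 1))
      ((C / ((C * t + r) ^ 2 + 1)) ^ 2 - (C * (C * t + r) / ((C * t + r) ^ 2 + 1)) ^ 2) t := by
  have hq := affine_sq_add_one_ne_zero C r t
  refine ((hasDerivAt_affine C r t).const_mul C).div (hasDerivAt_affine_sq_add_one C r t) hq
    |>.congr_deriv ?_
  field_simp
  ring

end AffineProfile

theorem geodesic_M21_closed_form_general (θ₀ d₀ b₀ s₀ : ℝ) (hb₀ : b₀ ≠ 0)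
    (r₀ C : ℝ) (hr₀ : r₀ = s₀ / b₀) (hC : C = b₀ * (r₀ ^ 2 + 1))
    (b s d θ : ℝ → ℝ)
    (hb : b = fun t => C / ((C * t + r₀) ^ 2 + 1))
    (hs : s = fun t => C * (C * t + r₀) / ((C * t + r₀) ^ 2 + 1))
    (hd : d = fun t => d₀ * ((C * t + r₀) ^ 2 + 1) / (r₀ ^ 2 + 1))
    (hθ : θ = fun t => θ₀ + Real.arctan (C * t + r₀) - Real.arctan r₀) :
    (∀ t : ℝ,
        HasDerivAt θ (b t) t ∧
        HasDerivAt d (2 * d t * s t) t ∧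
        HasDerivAt b (-2 * b t * s t) t ∧
        HasDerivAt s (b t ^ 2 - s t ^ 2) t) ∧
      θ 0 = θ₀ ∧ d 0 = d₀ ∧ b 0 = b₀ ∧ s 0 = s₀ := by
  subst hb hs hd hθ
  refine ⟨fun t => ⟨hasDerivAt_arctan_affine C r₀ t θ₀,
    hasDerivAt_const_mul_affine_sq_add_one_div C r₀ t d₀ (r₀ ^ 2 + 1),
    hasDerivAt_const_div_affine_sq_add_one C r₀ t,
    hasDerivAt_mul_affine_div_affine_sq_add_one C r₀ t⟩, ?_⟩
  have hq : r₀ ^ 2 + 1 ≠ 0 := by positivity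
  have hb0 : C / (r₀ ^ 2 + 1) = b₀ := by rw [hC]; field_simp
  simp only [mul_zero, zero_add]
  refine ⟨add_sub_cancel_right θ₀ _, by field_simp, hb0, ?_⟩
  rw [mul_div_right_comm, hb0, hr₀]
  field_simp

/-- **Closed-form Bures–Wasserstein geodesics in `M(2,1)` with nonzero horizontal velocity.**
With `r₀ = s₀ / b₀`, `C = b₀ (r₀² + 1)` and
`b t = C / ((C t + r₀)² + 1)`, `s t = C (C t + r₀) / ((C t + r₀)² + 1)`,
`d t = d₀ ((C t + r₀)² + 1) / (r₀² + 1)`, `θ t = θ₀ + arctan (C t + r₀) − arctan r₀`,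
these functions solve `θ' = b`, `d' = 2 d s`, `b' = -2 b s`, `s' = b² − s²` with the stated
initial conditions. -/
theorem geodesic_M21_closed_form (θ₀ d₀ b₀ s₀ : ℝ) (hd₀ : 0 < d₀) (hb₀ : b₀ ≠ 0)
    (r₀ C : ℝ) (hr₀ : r₀ = s₀ / b₀) (hC : C = b₀ * (r₀ ^ 2 + 1))
    (b s d θ : ℝ → ℝ)
    (hb : b = fun t => C / ((C * t + r₀) ^ 2 + 1))
    (hs : s = fun t => C * (C * t + r₀) / ((C * t + r₀) ^ 2 + 1))
    (hd : d = fun t => d₀ * ((C * t + r₀) ^ 2 + 1) / (r₀ ^ 2 + 1))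
    (hθ : θ = fun t => θ₀ + Real.arctan (C * t + r₀) - Real.arctan r₀) :
    (∀ t : ℝ,
        HasDerivAt θ (b t) t ∧
        HasDerivAt d (2 * d t * s t) t ∧
        HasDerivAt b (-2 * b t * s t) t ∧
        HasDerivAt s (b t ^ 2 - s t ^ 2) t) ∧
      θ 0 = θ₀ ∧ d 0 = d₀ ∧ b 0 = b₀ ∧ s 0 = s₀ :=
  geodesic_M21_closed_form_general θ₀ d₀ b₀ s₀ hb₀ r₀ C hr₀ hC b s d θ hb hs hd hθ
end

section
/- Let X, Y be real n×k matrices of full column rank k, let l = rank(XᵀY) and r = k − l. Then there is a bijection between the orthogonal group O(r) and the set I₂ = {R ∈ O(k) | Xᵀ·Y·R = (Xᵀ·Y·Yᵀ·X)^{1/2}}, where (XᵀYYᵀX)^{1/2} denotes the unique symmetric positive semidefinite square root of the positive semidefinite matrix XᵀYYᵀX. -/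
/-!
Write `A = XᵀY` and `S = (AAᵀ)^{1/2}`. Transposing, `A R = S` says that the isometry `Rᵀ` sends
`Aᵀ x` to `S x` for every `x`. Since `‖Aᵀ x‖ = ‖S x‖`, one such isometry `V₀` exists (a polar
decomposition of `A`), and `V ↦ V₀⁻¹ V` identifies all of them with the isometries fixing
`range Aᵀ` pointwise, that is, with the orthogonal group of `(range Aᵀ)ᗮ`, a space of dimension
`k - rank A`.
-/

open Matrix

theorem xtyytx_posSemidef {n k : ℕ} (X Y : Matrix (Fin n) (Fin k) ℝ) :
    (Xᵀ * Y * Yᵀ * X).PosSemidef := by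
  have h := Matrix.posSemidef_conjTranspose_mul_self (Yᵀ * X)
  simpa [Matrix.conjTranspose_mul, Matrix.mul_assoc] using h

/-- `(Xᵀ Y Yᵀ X)^{1/2}`: the unique symmetric positive semidefinite square root of
`Xᵀ * Y * Yᵀ * X`. -/
noncomputable def bwSqrt {n k : ℕ} (X Y : Matrix (Fin n) (Fin k) ℝ) :
    Matrix (Fin k) (Fin k) ℝ :=
  (xtyytx_posSemidef X Y).1.eigenvectorUnitary.1 *
    diagonal (Real.sqrt ∘ (xtyytx_posSemidef X Y).1.eigenvalues) *
    (star (xtyytx_posSemidef X Y).1.eigenvectorUnitary : Matrix (Fin k) (Fin k) ℝ)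

namespace LinearIsometryEquiv

variable {𝕜 E F : Type*} [RCLike 𝕜] [NormedAddCommGroup E] [InnerProductSpace 𝕜 E]
  [NormedAddCommGroup F] [InnerProductSpace 𝕜 F]

def autCongr (e : E ≃ₗᵢ[𝕜] F) : (E ≃ₗᵢ[𝕜] E) ≃ (F ≃ₗᵢ[𝕜] F) where
  toFun q := e.symm.trans (q.trans e)
  invFun q := e.trans (q.trans e.symm)
  left_inv q := ext fun x => by simp
  right_inv q := ext fun x => by simp

variable {W : Submodule 𝕜 E}

theorem map_orthogonal_of_forall_mem_eq {Q : E ≃ₗᵢ[𝕜] E} (hQ : ∀ w ∈ W, Q w = w) :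
    Wᗮ.map (Q.toLinearEquiv : E →ₗ[𝕜] E) = Wᗮ := by
  have hW : W.map (Q.toLinearEquiv : E →ₗ[𝕜] E) = W := by
    ext x
    refine ⟨?_, fun hx => ⟨x, hx, hQ x hx⟩⟩
    rintro ⟨w, hw, rfl⟩
    simpa [hQ w hw] using hw
  exact (W.map_orthogonal_equiv Q).trans (by rw [hW])

def restrictOrthogonal (Q : E ≃ₗᵢ[𝕜] E) (hQ : ∀ w ∈ W, Q w = w) : Wᗮ ≃ₗᵢ[𝕜] Wᗮ :=
  (Q.submoduleMap Wᗮ).trans (ofEq _ _ (map_orthogonal_of_forall_mem_eq hQ))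

variable (W) [W.HasOrthogonalProjection]

noncomputable def extendOrthogonal (q : Wᗮ ≃ₗᵢ[𝕜] Wᗮ) : E ≃ₗᵢ[𝕜] E :=
  W.orthogonalDecomposition.trans
    (((refl 𝕜 W).withLpProdCongr 2 q).trans W.orthogonalDecomposition.symm)

variable {W}

theorem extendOrthogonal_apply_of_mem (q : Wᗮ ≃ₗᵢ[𝕜] Wᗮ) {w : E} (hw : w ∈ W) :
    extendOrthogonal W q w = w := by
  have hw' : Wᗮ.orthogonalProjectionOnto w = 0 :=
    Submodule.orthogonalProjectionOnto_eq_zero_iff.mpr (W.le_orthogonal_orthogonal hw)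
  simp [extendOrthogonal, hw', Submodule.starProjection_eq_self_iff.mpr hw]

theorem extendOrthogonal_apply_orthogonal (q : Wᗮ ≃ₗᵢ[𝕜] Wᗮ) (v : Wᗮ) :
    extendOrthogonal W q v = q v := by
  simp [extendOrthogonal, Submodule.starProjection_apply_eq_zero_iff]

variable (W)

noncomputable def fixingEquivOrthogonal :
    {Q : E ≃ₗᵢ[𝕜] E // ∀ w ∈ W, Q w = w} ≃ (Wᗮ ≃ₗᵢ[𝕜] Wᗮ) where
  toFun Q := Q.1.restrictOrthogonal Q.2
  invFun q := ⟨extendOrthogonal W q, fun _ => extendOrthogonal_apply_of_mem q⟩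
  left_inv := by
    rintro ⟨Q, hQ⟩
    refine Subtype.ext <| ext fun x => ?_
    obtain ⟨w, hw, v, hv, rfl⟩ := W.exists_add_mem_mem_orthogonal x
    simp only [map_add, extendOrthogonal_apply_of_mem _ hw, hQ w hw]
    exact congrArg (w + ·) (extendOrthogonal_apply_orthogonal _ ⟨v, hv⟩)
  right_inv q := ext fun v => Subtype.ext (extendOrthogonal_apply_orthogonal _ v)

end LinearIsometryEquiv

namespace LinearMap

variable {𝕜 E F : Type*} [RCLike 𝕜] [AddCommGroup E] [Module 𝕜 E] [NormedAddCommGroup F]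
  [InnerProductSpace 𝕜 F] {f g : E →ₗ[𝕜] F}

def applyEqEquivFixingRange (V₀ : F ≃ₗᵢ[𝕜] F) (hV₀ : ∀ x, V₀ (f x) = g x) :
    {V : F ≃ₗᵢ[𝕜] F // ∀ x, V (f x) = g x} ≃ {Q : F ≃ₗᵢ[𝕜] F // ∀ w ∈ range f, Q w = w} where
  toFun V := ⟨V.1.trans V₀.symm, by
    rintro _ ⟨x, rfl⟩
    rw [LinearIsometryEquiv.trans_apply, V.2 x, ← hV₀ x, V₀.symm_apply_apply]⟩
  invFun Q := ⟨Q.1.trans V₀, fun x => by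
    rw [LinearIsometryEquiv.trans_apply, Q.2 _ (mem_range_self f x), hV₀]⟩
  left_inv V := Subtype.ext <| LinearIsometryEquiv.ext fun x => by simp
  right_inv Q := Subtype.ext <| LinearIsometryEquiv.ext fun x => by simp

variable [FiniteDimensional 𝕜 F]

/-- The partial isometry `f x ↦ g x` on `range f` is well defined because `f` and `g` have the
same kernel; it extends to an isometry of `F`. -/
theorem exists_linearIsometryEquiv_apply_eq (h : ∀ x, ‖f x‖ = ‖g x‖) :
    ∃ V : F ≃ₗᵢ[𝕜] F, ∀ x, V (f x) = g x := by
  have hker : ker f ≤ ker g := fun x hx => by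
    simpa [← norm_eq_zero (a := g x), ← h x] using hx
  let u : range f →ₗ[𝕜] F := (ker f).liftQ g hker ∘ₗ f.quotKerEquivRange.symm.toLinearMap
  have hu : ∀ x, u ⟨f x, mem_range_self f x⟩ = g x := fun x => by
    simp [u, quotKerEquivRange_symm_apply_image]
  let L : range f →ₗᵢ[𝕜] F := ⟨u, by rintro ⟨_, x, rfl⟩; rw [hu, ← h x]; rfl⟩
  refine ⟨L.extend.toLinearIsometryEquiv rfl, fun x => ?_⟩
  simpa [L] using (L.extend_apply ⟨f x, mem_range_self f x⟩).trans (hu x)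

theorem nonempty_applyEq_equiv_orthogonal (h : ∀ x, ‖f x‖ = ‖g x‖) :
    Nonempty ({V : F ≃ₗᵢ[𝕜] F // ∀ x, V (f x) = g x} ≃
      ((range f)ᗮ ≃ₗᵢ[𝕜] (range f)ᗮ)) :=
  have ⟨V₀, hV₀⟩ := exists_linearIsometryEquiv_apply_eq h
  ⟨(applyEqEquivFixingRange V₀ hV₀).trans (LinearIsometryEquiv.fixingEquivOrthogonal _)⟩

end LinearMap

namespace Matrix

theorem norm_toEuclideanLin_eq_of_conjTranspose_mul_self_eq {𝕜 m n : Type*} [RCLike 𝕜]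
    [Fintype m] [Fintype n] [DecidableEq n] {M N : Matrix m n 𝕜} (h : Mᴴ * M = Nᴴ * N)
    (x : EuclideanSpace 𝕜 n) : ‖toEuclideanLin M x‖ = ‖toEuclideanLin N x‖ := by
  classical
  have hsq : ∀ P : Matrix m n 𝕜,
      ‖toEuclideanLin P x‖ ^ 2 = RCLike.re (inner 𝕜 x (toEuclideanLin (Pᴴ * P) x)) := fun P => by
    rw [@norm_sq_eq_re_inner 𝕜, ← LinearMap.adjoint_inner_right,
      ← toEuclideanLin_conjTranspose_eq_adjoint, toLpLin_mul_same, LinearMap.comp_apply]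
  rw [← sq_eq_sq₀ (norm_nonneg _) (norm_nonneg _), hsq, hsq, h]

theorem finrank_range_toEuclideanLin {𝕜 m n : Type*} [RCLike 𝕜] [Fintype m] [Fintype n]
    [DecidableEq n] (M : Matrix m n 𝕜) :
    Module.finrank 𝕜 (LinearMap.range (toEuclideanLin M)) = M.rank :=
  (M.rank_eq_finrank_range_toLin (PiLp.basisFun 2 𝕜 m) (PiLp.basisFun 2 𝕜 n)).symm

theorem mul_eq_iff_forall_toEuclideanLin {𝕜 m n o : Type*} [RCLike 𝕜] [Fintype n] [Fintype o]
    [DecidableEq n] [DecidableEq o] {R : Matrix m n 𝕜} {B : Matrix n o 𝕜} {C : Matrix m o 𝕜} :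
    R * B = C ↔ ∀ x, toEuclideanLin R (toEuclideanLin B x) = toEuclideanLin C x := by
  rw [← toEuclideanLin.injective.eq_iff, toLpLin_mul_same, LinearMap.ext_iff]
  simp only [LinearMap.comp_apply]

variable {n : Type*} [Fintype n] [DecidableEq n]

theorem toEuclideanCLM_mem_unitary_iff {R : Matrix n n ℝ} :
    toEuclideanCLM (𝕜 := ℝ) R ∈ unitary (EuclideanSpace ℝ n →L[ℝ] EuclideanSpace ℝ n) ↔
      Rᵀ * R = 1 := by
  rw [← mem_orthogonalGroup_iff']
  refine ⟨fun h => ?_, Unitary.map_mem _⟩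
  simpa using Unitary.map_mem (toEuclideanCLM (n := n) (𝕜 := ℝ)).symm.toStarAlgHom h

noncomputable def orthogonalLinearIsometryEquiv :
    {R : Matrix n n ℝ // Rᵀ * R = 1} ≃ (EuclideanSpace ℝ n ≃ₗᵢ[ℝ] EuclideanSpace ℝ n) :=
  ((toEuclideanCLM (n := n) (𝕜 := ℝ)).toEquiv.subtypeEquiv
    fun _ => toEuclideanCLM_mem_unitary_iff.symm).trans Unitary.linearIsometryEquiv.toEquiv

noncomputable def orthogonalMulEqEquiv (A C : Matrix n n ℝ) :
    {R : Matrix n n ℝ // Rᵀ * R = 1 ∧ A * R = C} ≃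
      {V : EuclideanSpace ℝ n ≃ₗᵢ[ℝ] EuclideanSpace ℝ n //
        ∀ x, V (toEuclideanLin Aᵀ x) = toEuclideanLin Cᵀ x} :=
  ((transposeAddEquiv n n ℝ).toEquiv.subtypeEquiv fun R => by
      simp only [AddEquiv.toEquiv_eq_coe, AddEquiv.coe_toEquiv, transposeAddEquiv_apply,
        transpose_transpose, mul_eq_one_comm (a := R), ← transpose_mul, transpose_inj]).trans <|
    (Equiv.subtypeSubtypeEquivSubtypeInter (fun U : Matrix n n ℝ => Uᵀ * U = 1)
      (fun U => U * Aᵀ = Cᵀ)).symm.trans <|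
      Equiv.subtypeEquiv orthogonalLinearIsometryEquiv fun R => mul_eq_iff_forall_toEuclideanLin

end Matrix

open scoped MatrixOrder

theorem bwSqrt_eq_sqrt {n k : ℕ} (X Y : Matrix (Fin n) (Fin k) ℝ) :
    bwSqrt X Y = CFC.sqrt (Xᵀ * Y * Yᵀ * X) := by
  have hM := xtyytx_posSemidef X Y
  rw [CFC.sqrt_eq_cfc, cfc_nnreal_eq_real _ _ hM.nonneg, hM.1.cfc_eq]
  simp [IsHermitian.cfc, bwSqrt, Unitary.conjStarAlgAut_apply, Function.comp_def,
    max_eq_left (hM.eigenvalues_nonneg _)]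

theorem bwSqrt_mul_self {n k : ℕ} (X Y : Matrix (Fin n) (Fin k) ℝ) :
    bwSqrt X Y * bwSqrt X Y = Xᵀ * Y * Yᵀ * X := by
  rw [bwSqrt_eq_sqrt, CFC.sqrt_mul_sqrt_self _ (xtyytx_posSemidef X Y).nonneg]

theorem bwSqrt_transpose {n k : ℕ} (X Y : Matrix (Fin n) (Fin k) ℝ) :
    (bwSqrt X Y)ᵀ = bwSqrt X Y := by
  rw [bwSqrt_eq_sqrt]
  exact (CFC.sqrt_nonneg _).posSemidef.1

theorem logarithm_index_bijection_general {n k : ℕ} (X Y : Matrix (Fin n) (Fin k) ℝ)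
    (l r : ℕ) (hl : l = (Xᵀ * Y).rank) (hr : r = k - l) :
    Nonempty
      ({R : Matrix (Fin r) (Fin r) ℝ // Rᵀ * R = 1} ≃
        {R : Matrix (Fin k) (Fin k) ℝ // Rᵀ * R = 1 ∧ Xᵀ * Y * R = bwSqrt X Y}) := by
  subst hl hr
  set A := Xᵀ * Y
  set W := LinearMap.range (toEuclideanLin Aᵀ)
  have hAS : (Aᵀ)ᴴ * Aᵀ = (bwSqrt X Y)ᵀᴴ * (bwSqrt X Y)ᵀ := by
    simp [conjTranspose_eq_transpose_of_trivial, bwSqrt_transpose, bwSqrt_mul_self, A,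
      Matrix.mul_assoc]
  obtain ⟨e⟩ := LinearMap.nonempty_applyEq_equiv_orthogonal
    (norm_toEuclideanLin_eq_of_conjTranspose_mul_self_eq hAS)
  have hWperp : Module.finrank ℝ Wᗮ = k - A.rank :=
    Submodule.finrank_add_finrank_orthogonal' <| by
      rw [finrank_range_toEuclideanLin, rank_transpose, finrank_euclideanSpace_fin]
      have := A.rank_le_width
      omega
  exact ⟨orthogonalLinearIsometryEquiv.trans <|
    (((stdOrthonormalBasis ℝ Wᗮ).reindex (finCongr hWperp)).repr.autCongr.symm.trans e.symm).trans
      (orthogonalMulEqEquiv A (bwSqrt X Y)).symm⟩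

/-- **Bijection between Grassmannian and Bures–Wasserstein logarithm index sets.** For
`X, Y` of full column rank `k`, with `l = rank (Xᵀ Y)` and `r = k - l`, there is a bijection
between `O(r)` and `I₂ = {R ∈ O(k) | Xᵀ Y R = (Xᵀ Y Yᵀ X)^{1/2}}`. -/
theorem logarithm_index_bijection {n k : ℕ} (X Y : Matrix (Fin n) (Fin k) ℝ)
    (hX : X.rank = k) (hY : Y.rank = k)
    (l r : ℕ) (hl : l = (Xᵀ * Y).rank) (hr : r = k - l) :
    Nonempty
      ({R : Matrix (Fin r) (Fin r) ℝ // Rᵀ * R = 1} ≃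
        {R : Matrix (Fin k) (Fin k) ℝ // Rᵀ * R = 1 ∧ Xᵀ * Y * R = bwSqrt X Y}) :=
  logarithm_index_bijection_general X Y l r hl hr
end
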